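/- There exists a constant C such that for every m ≥ 1, the number of distinct words of length m over {−1,+1} that occur as a contiguous subword (factor) of S(n) for some n ≥ 0 is at most C·m, where S(n) are the 1-dimensional paperfolding patterns. -/

import Mathlib

/-!
Every factor `w` of some `S(n)` with `|w| ≤ 2^k` occurs, possibly reflected, in `S(k+2)`.
Write `S(n+1) = r(S(n)) ++ [1] ++ S(n)`. A factor inside one half is handled by induction,
the reflection swapping the two alternatives. A factor straddling the middle crease consists of
a short suffix of `r(S(n))` and a short prefix of `S(n)`; for `n > k` these are a suffix of
`S(k)` and a prefix of `r(S(k))`, and `S(k) ++ [1] ++ r(S(k))` is the middle of `S(k+2)`.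
Since `r(S(k+2))` and `S(k+2)` are both factors of `S(k+3)`, choosing `m ≤ 2^k ≤ 2m` shows
that all length-`m` factors start at one of the `2^(k+3) ≤ 16 m` positions of `S(k+3)`.
-/

/-- Reflection of a word of creases: reverse and negate every sign. -/
def rPF (w : List ℤ) : List ℤ := (w.map (fun s => -s)).reverse

/-- The 1-dimensional paperfolding patterns: `S(0) = []` and
`S(n+1) = r(S(n)) ++ [+1] ++ S(n)`; `S(n)` has length `2^n − 1`. -/
def SPF : ℕ → List ℤ
  | 0 => []
  | n + 1 => rPF (SPF n) ++ [1] ++ SPF n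

/-- The set of factors of length `m` of the paperfolding patterns. -/
def pfFactors (m : ℕ) : Set (List ℤ) :=
  {w | w.length = m ∧ ∃ n : ℕ, w <:+: SPF n}

namespace List

variable {α : Type*}

theorem infix_append_cons {w X Y : List α} {c : α} (h : w <:+: X ++ c :: Y) :
    w <:+: X ∨ w <:+: Y ∨ ∃ u v, u <:+ X ∧ v <+: Y ∧ w = u ++ c :: v := by
  rcases infix_append_iff.mp h with hX | hcY | ⟨u, v', rfl, hu, hv'⟩
  · exact .inl hX
  · rcases infix_cons_iff.mp hcY with hp | hY
    · rcases prefix_cons_iff.mp hp with rfl | ⟨v, rfl, hv⟩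
      · exact .inl nil_infix
      · exact .inr (.inr ⟨[], v, nil_suffix, hv, rfl⟩)
    · exact .inr (.inl hY)
  · rcases prefix_cons_iff.mp hv' with rfl | ⟨v, rfl, hv⟩
    · exact .inl (by simpa using hu.isInfix)
    · exact .inr (.inr ⟨u, v, hu, hv, rfl⟩)

theorem append_cons_infix_append_cons {u v X Y : List α} (c : α) (hu : u <:+ X)
    (hv : v <+: Y) : u ++ c :: v <:+: X ++ c :: Y := by
  obtain ⟨s, rfl⟩ := hu
  obtain ⟨t, rfl⟩ := hv
  exact ⟨s, t, by simp⟩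

theorem IsInfix.exists_eq_take_drop {w L : List α} (h : w <:+: L) :
    ∃ i ≤ L.length, w = (L.drop i).take w.length := by
  obtain ⟨s, t, rfl⟩ := h
  refine ⟨s.length, by simp only [length_append]; omega, ?_⟩
  rw [append_assoc, drop_left' rfl, take_left' rfl]

theorem setOf_infix_length_eq_subset [DecidableEq α] (L : List α) (m : ℕ) :
    {w | w.length = m ∧ w <:+: L} ⊆
      ↑((Finset.range (L.length + 1)).image fun i => (L.drop i).take m) := by
  rintro w ⟨rfl, hw⟩
  obtain ⟨i, hi, hwi⟩ := hw.exists_eq_take_drop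
  exact Finset.mem_image.2 ⟨i, Finset.mem_range.2 (Nat.lt_succ_of_le hi), hwi.symm⟩

theorem finite_setOf_infix_length_eq (L : List α) (m : ℕ) :
    {w | w.length = m ∧ w <:+: L}.Finite := by
  classical
  exact (Finset.finite_toSet _).subset (setOf_infix_length_eq_subset L m)

theorem ncard_setOf_infix_length_eq_le (L : List α) (m : ℕ) :
    {w | w.length = m ∧ w <:+: L}.ncard ≤ L.length + 1 := by
  classical
  calc {w | w.length = m ∧ w <:+: L}.ncard
      ≤ ((Finset.range (L.length + 1)).image fun i => (L.drop i).take m).card := by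
        rw [← Set.ncard_coe_finset]
        exact Set.ncard_le_ncard (setOf_infix_length_eq_subset L m) (Finset.finite_toSet _)
    _ ≤ (Finset.range (L.length + 1)).card := Finset.card_image_le
    _ = L.length + 1 := Finset.card_range _

end List

theorem rPF_rPF (a : List ℤ) : rPF (rPF a) = a := by
  simp [rPF, List.map_reverse]

theorem length_rPF (a : List ℤ) : (rPF a).length = a.length := by
  simp [rPF]

theorem List.IsInfix.rPF {a b : List ℤ} (h : a <:+: b) : _root_.rPF a <:+: _root_.rPF b :=
  List.reverse_infix.mpr (h.map _)

theorem List.IsSuffix.rPF {a b : List ℤ} (h : a <:+ b) : _root_.rPF a <+: _root_.rPF b :=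
  List.reverse_prefix.mpr (h.map _)

theorem List.IsPrefix.rPF {a b : List ℤ} (h : a <+: b) : _root_.rPF a <:+ _root_.rPF b :=
  List.reverse_suffix.mpr (h.map _)

theorem infix_rPF_iff {a b : List ℤ} : a <:+: rPF b ↔ rPF a <:+: b :=
  ⟨fun h => by simpa only [rPF_rPF] using h.rPF, fun h => by simpa only [rPF_rPF] using h.rPF⟩

theorem SPF_succ (n : ℕ) : SPF (n + 1) = rPF (SPF n) ++ 1 :: SPF n := by
  simp [SPF]

theorem length_SPF (n : ℕ) : (SPF n).length = 2 ^ n - 1 := by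
  induction n with
  | zero => rfl
  | succ n ih =>
    have := Nat.one_le_two_pow (n := n)
    simp only [SPF_succ, List.length_append, List.length_cons, length_rPF, ih, pow_succ]
    omega

theorem SPF_suffix_SPF {k n : ℕ} (h : k ≤ n) : SPF k <:+ SPF n := by
  induction n, h using Nat.le_induction with
  | base => exact List.suffix_refl _
  | succ n _ ih => exact ih.trans (List.suffix_append (rPF (SPF n) ++ [1]) (SPF n))

theorem rPF_SPF_prefix_SPF {k n : ℕ} (h : k < n) : rPF (SPF k) <+: SPF n := by
  obtain ⟨n, rfl⟩ := Nat.exists_eq_add_of_lt h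
  rw [SPF_succ]
  exact (SPF_suffix_SPF (Nat.le_add_right k n)).rPF.trans (List.prefix_append _ _)

theorem SPF_suffix_rPF_SPF {k n : ℕ} (h : k < n) : SPF k <:+ rPF (SPF n) := by
  simpa only [rPF_rPF] using (rPF_SPF_prefix_SPF h).rPF

theorem SPF_append_rPF_SPF_infix (k : ℕ) : SPF k ++ 1 :: rPF (SPF k) <:+: SPF (k + 2) := by
  rw [SPF_succ]
  exact List.append_cons_infix_append_cons 1 (SPF_suffix_rPF_SPF k.lt_succ_self)
    (rPF_SPF_prefix_SPF k.lt_succ_self)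

theorem straddle_infix_SPF {k n : ℕ} {u v : List ℤ} (hkn : k < n) (hu : u <:+ rPF (SPF n))
    (hv : v <+: SPF n) (hul : u.length ≤ 2 ^ k - 1) (hvl : v.length ≤ 2 ^ k - 1) :
    u ++ 1 :: v <:+: SPF (k + 2) := by
  have hu' : u <:+ SPF k :=
    List.suffix_of_suffix_length_le hu (SPF_suffix_rPF_SPF hkn) (by rwa [length_SPF])
  have hv' : v <+: rPF (SPF k) :=
    List.prefix_of_prefix_length_le hv (rPF_SPF_prefix_SPF hkn) (by rwa [length_rPF, length_SPF])
  exact (List.append_cons_infix_append_cons 1 hu' hv').trans (SPF_append_rPF_SPF_infix k)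

theorem infix_SPF_of_length_le {k : ℕ} :
    ∀ {n : ℕ} {w : List ℤ}, w.length ≤ 2 ^ k → w <:+: SPF n →
      w <:+: SPF (k + 2) ∨ rPF w <:+: SPF (k + 2)
  | 0, _, _, hw => .inl (hw.trans (SPF_suffix_SPF (Nat.zero_le _)).isInfix)
  | n + 1, w, hlen, hw => by
    rcases le_or_gt (n + 1) (k + 2) with hn | hn
    · exact .inl (hw.trans (SPF_suffix_SPF hn).isInfix)
    rw [SPF_succ] at hw
    rcases List.infix_append_cons hw with hleft | hright | ⟨u, v, hu, hv, rfl⟩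
    · have := infix_SPF_of_length_le (by rwa [length_rPF]) (infix_rPF_iff.mp hleft)
      rwa [rPF_rPF, or_comm] at this
    · exact infix_SPF_of_length_le hlen hright
    · simp only [List.length_append, List.length_cons] at hlen
      exact .inl (straddle_infix_SPF (by omega) hu hv (by omega) (by omega))

theorem pfFactors_subset {m k : ℕ} (hm : m ≤ 2 ^ k) :
    pfFactors m ⊆ {w | w.length = m ∧ w <:+: SPF (k + 3)} := by
  rintro w ⟨rfl, n, hw⟩
  refine ⟨rfl, ?_⟩
  rcases infix_SPF_of_length_le hm hw with h | h
  · exact h.trans (SPF_suffix_SPF (Nat.le_succ _)).isInfix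
  · exact (infix_rPF_iff.mpr h).trans (rPF_SPF_prefix_SPF (Nat.lt_succ_self _)).isInfix

/-- There is a constant `C` such that for every `m ≥ 1`, the number of distinct
words of length `m` over `{−1, +1}` occurring as contiguous subwords of some
`S(n)` is at most `C · m`. -/
theorem stmt15 :
    ∃ C : ℕ, ∀ m : ℕ, 1 ≤ m →
      (pfFactors m).Finite ∧ (pfFactors m).ncard ≤ C * m := by
  refine ⟨16, fun m hm => ?_⟩
  set k := Nat.log 2 m + 1
  have hmk : m ≤ 2 ^ k := (Nat.lt_pow_succ_log_self one_lt_two m).le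
  have hlog : 2 ^ Nat.log 2 m ≤ m := Nat.pow_log_le_self 2 (by omega)
  have hsub := pfFactors_subset hmk
  refine ⟨(List.finite_setOf_infix_length_eq _ m).subset hsub, ?_⟩
  calc (pfFactors m).ncard
      ≤ {w | w.length = m ∧ w <:+: SPF (k + 3)}.ncard :=
        Set.ncard_le_ncard hsub (List.finite_setOf_infix_length_eq _ m)
    _ ≤ (SPF (k + 3)).length + 1 := List.ncard_setOf_infix_length_eq_le _ m
    _ = 2 ^ Nat.log 2 m * 16 := by
        rw [length_SPF, show k + 3 = Nat.log 2 m + 4 by omega, pow_add]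
        have := Nat.one_le_two_pow (n := Nat.log 2 m)
        omega
    _ ≤ 16 * m := by omega
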